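/- Let H be a complex Hilbert space and let E, F be effects on H. If the Jordan product E ∘ F = ½(EF + FE) is a positive operator, then |E − F| ≤ E + F, i.e., the generalized infimum satisfies E ⊓ F ≥ 0. -/

import Mathlib

/-!
Since `(E + F)² - (E - F)² = 2 (EF + FE) = 4 (E ∘ F)`, positivity of the Jordan product gives
`(E - F)² ≤ (E + F)²`. The square root is operator monotone, so
`|E - F| = √((E - F)²) ≤ √((E + F)²) = E + F`.
-/

variable {H : Type*} [NormedAddCommGroup H] [InnerProductSpace ℂ H] [CompleteSpace H]

/-- An effect on a complex Hilbert space: an operator `E` with `0 ≤ E ≤ 1` in the Loewner order. -/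
def IsEffect (E : H →L[ℂ] H) : Prop := 0 ≤ E ∧ E ≤ 1


/-- The Jordan product E ∘ F = ½(EF + FE). -/
noncomputable def jordan (E F : H →L[ℂ] H) : H →L[ℂ] H := (2 : ℂ)⁻¹ • (E * F + F * E)


/-- The absolute value |A| of a selfadjoint operator: the positive square root of A². -/
noncomputable def opAbs (A : H →L[ℂ] H) : H →L[ℂ] H := CFC.sqrt (A ^ 2)

/-- The generalized infimum E ⊓ F = ½(E + F - |E - F|). -/
noncomputable def ginf (E F : H →L[ℂ] H) : H →L[ℂ] H := (2 : ℂ)⁻¹ • (E + F - opAbs (E - F))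

lemma sq_sub_le_sq_add {R : Type*} [Ring R] [PartialOrder R] [IsOrderedAddMonoid R] {a b : R}
    (h : 0 ≤ a * b + b * a) : (a - b) ^ 2 ≤ (a + b) ^ 2 := by
  have hdiff : (a + b) ^ 2 - (a - b) ^ 2 = (a * b + b * a) + (a * b + b * a) := by noncomm_ring
  exact sub_nonneg.mp (hdiff ▸ add_nonneg h h)

lemma CFC.sqrt_sq_sub_le_add {A : Type*} [CStarAlgebra A] [PartialOrder A] [StarOrderedRing A]
    {a b : A} (ha : 0 ≤ a) (hb : 0 ≤ b) (hab : 0 ≤ a * b + b * a) :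
    CFC.sqrt ((a - b) ^ 2) ≤ a + b :=
  calc CFC.sqrt ((a - b) ^ 2) ≤ CFC.sqrt ((a + b) ^ 2) := CFC.sqrt_le_sqrt _ _ (sq_sub_le_sq_add hab)
    _ = a + b := CFC.sqrt_sq (a + b) (add_nonneg ha hb)

lemma opAbs_sub_le_add_of_jordan_nonneg {E F : H →L[ℂ] H} (hE : 0 ≤ E) (hF : 0 ≤ F)
    (h : 0 ≤ jordan E F) : opAbs (E - F) ≤ E + F := by
  have hEF : E * F + F * E = jordan E F + jordan E F := by
    rw [jordan, ← add_smul]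
    norm_num
  exact CFC.sqrt_sq_sub_le_add hE hF (hEF ▸ add_nonneg h h)

open scoped ComplexOrder in
lemma ginf_nonneg_of_opAbs_sub_le_add {E F : H →L[ℂ] H} (h : opAbs (E - F) ≤ E + F) :
    0 ≤ ginf E F :=
  smul_nonneg (by positivity) (sub_nonneg.mpr h)

/-- If the Jordan product of two effects is positive then |E - F| ≤ E + F, i.e. E ⊓ F ≥ 0. -/
theorem ginf_nonneg_of_jordan_nonneg (E F : H →L[ℂ] H) (hE : IsEffect E) (hF : IsEffect F)
    (h : 0 ≤ jordan E F) :
    opAbs (E - F) ≤ E + F ∧ 0 ≤ ginf E F := by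
  have habs := opAbs_sub_le_add_of_jordan_nonneg hE.1 hF.1 h
  exact ⟨habs, ginf_nonneg_of_opAbs_sub_le_add habs⟩
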